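/- Let A be an algebra with a system of local units S = {e_λ}_{λ∈Λ}. Then the category of unital left A-modules is equivalent to the category of modules over the k-category C^S(A), whose objects are Λ and whose morphism spaces are C^S(A)(α,β) = e_β A e_α. One functor sends a unital A-module M to {e_λ M}; the quasi-inverse sends a C^S(A)-module {M_λ} to the direct limit of the system (M_λ, I_{(λ,α)}) where I_{(λ,α)} = e_λ·_{(λ,α)}(−) for e_λ ≤ e_α. -/

import Mathlib

open CategoryTheory

section UModPrelude

variable (k : Type) [Field k]

/-- A unital left module over a `k`-module `R` equipped with a bilinear (possibly
nonunital) multiplication `m`. -/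
structure UMod (R : Type) [AddCommGroup R] [Module k R] (m : R →ₗ[k] R →ₗ[k] R) where
  carrier : Type
  [acg : AddCommGroup carrier]
  [mod : Module k carrier]
  act : R →ₗ[k] carrier →ₗ[k] carrier
  act_mul : ∀ (r s : R) (x : carrier), act (m r s) x = act r (act s x)
  unital : ∀ x : carrier,
    x ∈ Submodule.span k {y : carrier | ∃ (r : R) (x' : carrier), y = act r x'}

attribute [instance] UMod.acg UMod.mod

variable {R : Type} [AddCommGroup R] [Module k R] (m : R →ₗ[k] R →ₗ[k] R)

instance : Category (UMod k R m) where
  Hom M N := {f : M.carrier →ₗ[k] N.carrier //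
    ∀ (r : R) (x : M.carrier), f (M.act r x) = N.act r (f x)}
  id M := ⟨LinearMap.id, fun _ _ => rfl⟩
  comp f g := ⟨g.1.comp f.1, fun r x => by simp [LinearMap.comp_apply, f.2, g.2]⟩
  id_comp f := Subtype.ext (by ext x; rfl)
  comp_id f := Subtype.ext (by ext x; rfl)
  assoc f g h := Subtype.ext (by ext x; rfl)

end UModPrelude

section Stmt16

variable (k : Type) [Field k]
variable (A : Type) [NonUnitalRing A] [Module k A] [SMulCommClass k A A] [IsScalarTower k A A]

/-- `S` is a system of local units for the algebra `A`. -/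
def IsSLU (S : Set A) : Prop :=
  (∀ e ∈ S, e * e = e) ∧
    ∀ F : Finset A, ∃ e ∈ S, ∀ a ∈ F, e * a = a ∧ a * e = a

/-- The corner `e_β A e_α`, the space of morphisms `α → β` in the category `C^S(A)`. -/
noncomputable def corner (β α : A) : Submodule k A :=
  LinearMap.range ((LinearMap.mulLeft k β).comp (LinearMap.mulRight k α))

variable (S : Set A)

/-- A module over the `k`-category `C^S(A)` (a `k`-linear functor `C^S(A) → Vec`). -/
structure CSMod where
  M : ↥S → Type
  [acg : ∀ e : ↥S, AddCommGroup (M e)]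
  [mod : ∀ e : ↥S, Module k (M e)]
  act : ∀ α β : ↥S, ↥(corner k A (β : A) (α : A)) →ₗ[k] M α →ₗ[k] M β
  act_id : ∀ (α : ↥S) (hα : ((α : A)) ∈ corner k A (α : A) (α : A)) (x : M α),
    act α α ⟨(α : A), hα⟩ x = x
  act_comp : ∀ (α β γ : ↥S) (f : ↥(corner k A (γ : A) (β : A)))
    (g : ↥(corner k A (β : A) (α : A))) (fg : ↥(corner k A (γ : A) (α : A))),
    (fg : A) = (f : A) * (g : A) →
    ∀ x : M α, act α γ fg x = act β γ f (act α β g x)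

attribute [instance] CSMod.acg CSMod.mod

open CategoryTheory in
noncomputable instance : Category (CSMod k A S) where
  Hom M N := {φ : ∀ e : ↥S, M.M e →ₗ[k] N.M e //
    ∀ (α β : ↥S) (f : ↥(corner k A (β : A) (α : A))) (x : M.M α),
      φ β (M.act α β f x) = N.act α β f (φ α x)}
  id M := ⟨fun _ => LinearMap.id, fun _ _ _ _ => rfl⟩
  comp φ ψ := ⟨fun e => (ψ.1 e).comp (φ.1 e), fun α β f x => by
    simp [LinearMap.comp_apply, φ.2, ψ.2]⟩
  id_comp φ := Subtype.ext (by funext e; ext x; rfl)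
  comp_id φ := Subtype.ext (by funext e; ext x; rfl)
  assoc φ ψ χ := Subtype.ext (by funext e; ext x; rfl)

/-!
The functor sends a unital module `M` to the family of subspaces `e M = {x | e x = x}`, on
which the corners act by multiplication. Conversely a `C^S(A)`-module `N` is sent to the direct
limit of the `N e` along the maps `x ↦ e • x`, on which `a ∈ A` acts by `a • [x]_e = [a e • x]_f`
for any local unit `f` with `f a = a`: two such `f` have a common upper bound, so the class does
not depend on `f`. Evaluation `lim (e M) → M` is bijective because `M` is unital, and `x ↦ [x]_e`
identifies `N e` with `e • lim N` because the projections `[y]_f ↦ e f • y` retract it.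
-/

section Equivalence

open scoped Classical

variable {k A S}

theorem mem_corner_of_mul_eq {β α x : A} (hβ : β * x = x) (hα : x * α = x) :
    x ∈ corner k A β α :=
  ⟨x, show β * (x * α) = x by rw [hα, hβ]⟩

theorem mul_mem_corner_of_mul_eq {β α a : A} (hβ : β * a = a) (hα : IsIdempotentElem α) :
    a * α ∈ corner k A β α :=
  mem_corner_of_mul_eq (by rw [← mul_assoc, hβ]) (by rw [mul_assoc, hα.eq])

theorem IsIdempotentElem.mul_eq_of_mem_corner {β α x : A} (hβ : IsIdempotentElem β)
    (hx : x ∈ corner k A β α) : β * x = x := by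
  obtain ⟨a, rfl⟩ := hx
  show β * (β * (a * α)) = β * (a * α)
  rw [← mul_assoc, hβ.eq]

theorem IsIdempotentElem.mul_eq_of_mem_corner_right {β α x : A} (hα : IsIdempotentElem α)
    (hx : x ∈ corner k A β α) : x * α = x := by
  obtain ⟨a, rfl⟩ := hx
  show β * (a * α) * α = β * (a * α)
  rw [mul_assoc, mul_assoc, hα.eq]

/-- The order `e ≤ f ↔ f e = e = e f` of the paper, reflexively closed so that it is a preorder
without assuming idempotency; on a system of local units the closure changes nothing. -/
abbrev naturalPreorder : Preorder S where
  le e f := e = f ∨ ((f : A) * e = e ∧ (e : A) * f = e)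
  le_refl e := Or.inl rfl
  le_trans e f g := by
    rintro (rfl | ⟨hfe, hef⟩) (rfl | ⟨hgf, hfg⟩)
    · exact Or.inl rfl
    · exact Or.inr ⟨hgf, hfg⟩
    · exact Or.inr ⟨hfe, hef⟩
    · refine Or.inr ⟨?_, ?_⟩
      · rw [← hfe, ← mul_assoc, hgf]
      · rw [← hef, mul_assoc, hfg]

attribute [local instance] naturalPreorder

namespace IsSLU

variable (hS : IsSLU A S)
include hS

theorem isIdempotentElem (e : S) : IsIdempotentElem (e : A) :=
  hS.1 e e.2

theorem le_iff {e f : S} : e ≤ f ↔ (f : A) * e = e ∧ (e : A) * f = e := by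
  refine ⟨?_, Or.inr⟩
  rintro (rfl | h)
  exacts [⟨hS.isIdempotentElem e, hS.isIdempotentElem e⟩, h]

theorem mul_eq_of_le {e f : S} (hef : e ≤ f) {a : A} (ha : (e : A) * a = a) :
    (f : A) * a = a := by
  rw [← ha, ← mul_assoc, (hS.le_iff.1 hef).1]

theorem nonempty : Nonempty S :=
  let ⟨e, he, _⟩ := hS.2 ∅
  ⟨⟨e, he⟩⟩

theorem isDirectedOrder : IsDirectedOrder S := by
  refine ⟨fun e f => ?_⟩
  obtain ⟨g, hg, hgef⟩ := hS.2 {(e : A), (f : A)}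
  exact ⟨⟨g, hg⟩, Or.inr (hgef e (by simp)), Or.inr (hgef f (by simp))⟩

theorem exists_mul_eq_and_mul_eq (a b : A) : ∃ f : S, (f : A) * a = a ∧ (f : A) * b = b := by
  obtain ⟨f, hf, hfab⟩ := hS.2 {a, b}
  exact ⟨⟨f, hf⟩, (hfab a (by simp)).1, (hfab b (by simp)).1⟩

noncomputable def unitFor (a : A) : S :=
  ⟨(hS.2 {a}).choose, (hS.2 {a}).choose_spec.1⟩

theorem unitFor_mul (a : A) : (hS.unitFor a : A) * a = a :=
  ((hS.2 {a}).choose_spec.2 a (Finset.mem_singleton_self a)).1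

end IsSLU

namespace UMod

variable {R : Type} [AddCommGroup R] [Module k R] {m : R →ₗ[k] R →ₗ[k] R}

def fixed (M : UMod k R m) (r : R) : Submodule k M.carrier :=
  LinearMap.eqLocus (M.act r) LinearMap.id

theorem mem_fixed {M : UMod k R m} {r : R} {x : M.carrier} : x ∈ M.fixed r ↔ M.act r x = x :=
  Iff.rfl

theorem hom_mem_fixed {M N : UMod k R m} (f : M ⟶ N) {r : R} {x : M.carrier}
    (hx : x ∈ M.fixed r) : f.1 x ∈ N.fixed r := by
  rw [mem_fixed] at hx ⊢
  rw [← f.2, hx]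

theorem isIso_of_bijective {M N : UMod k R m} (f : M ⟶ N) (hf : Function.Bijective f.1) :
    IsIso f := by
  let e := LinearEquiv.ofBijective f.1 hf
  refine ⟨⟨⟨e.symm.toLinearMap, fun r y => e.injective ?_⟩, ?_, ?_⟩⟩
  · change f.1 (e.symm _) = f.1 (M.act r (e.symm y))
    rw [f.2]
    exact (e.apply_symm_apply _).trans (congrArg (N.act r) (e.apply_symm_apply y)).symm
  · exact Subtype.ext (LinearMap.ext e.symm_apply_apply)
  · exact Subtype.ext (LinearMap.ext e.apply_symm_apply)

section Mul

variable (M : UMod k A (LinearMap.mul k A))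

theorem act_mul_apply (r s : A) (x : M.carrier) : M.act (r * s) x = M.act r (M.act s x) :=
  M.act_mul r s x

theorem act_mem_fixed {r s : A} (h : r * s = s) (x : M.carrier) : M.act s x ∈ M.fixed r := by
  rw [mem_fixed, ← act_mul_apply, h]

end Mul

end UMod

theorem CSMod.isIso_of_bijective {M N : CSMod k A S} (φ : M ⟶ N)
    (hφ : ∀ e, Function.Bijective (φ.1 e)) : IsIso φ := by
  let ψ e := LinearEquiv.ofBijective (φ.1 e) (hφ e)
  refine ⟨⟨⟨fun e => (ψ e).symm.toLinearMap, fun α β c y => (ψ β).injective ?_⟩,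
    ?_, ?_⟩⟩
  · change φ.1 β ((ψ β).symm _) = φ.1 β (M.act α β c ((ψ α).symm y))
    rw [φ.2]
    exact ((ψ β).apply_symm_apply _).trans
      (congrArg (N.act α β c) ((ψ α).apply_symm_apply y)).symm
  · exact Subtype.ext (funext fun e => LinearMap.ext (ψ e).symm_apply_apply)
  · exact Subtype.ext (funext fun e => LinearMap.ext (ψ e).apply_symm_apply)

variable (hS : IsSLU A S)

namespace UMod

variable (M : UMod k A (LinearMap.mul k A))

noncomputable def cornerAct (α β : S) :
    corner k A β α →ₗ[k] M.fixed α →ₗ[k] M.fixed β :=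
  LinearMap.codRestrict₂ (M.act.domRestrict₁₂ (corner k A β α) (M.fixed α))
    (M.fixed β).subtype (Submodule.injective_subtype _) fun c x =>
      ⟨⟨M.act c x, M.act_mem_fixed ((hS.isIdempotentElem β).mul_eq_of_mem_corner c.2) x⟩, rfl⟩

theorem coe_cornerAct {α β : S} (c : corner k A β α) (x : M.fixed α) :
    (M.cornerAct hS α β c x : M.carrier) = M.act c x :=
  LinearMap.codRestrict₂_apply (M.act.domRestrict₁₂ _ _) (M.fixed β).subtype _ _ c x

noncomputable def toCSMod : CSMod k A S where
  M e := M.fixed (e : A)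
  act := M.cornerAct hS
  act_id α hα x := Subtype.ext ((M.coe_cornerAct hS _ x).trans x.2)
  act_comp α β γ f g fg hfg x := Subtype.ext <| by
    simp only [coe_cornerAct, hfg, act_mul_apply]

noncomputable def toCSModFunctor : UMod k A (LinearMap.mul k A) ⥤ CSMod k A S where
  obj M := M.toCSMod hS
  map {M N} f := ⟨fun _ => f.1.restrict fun _ => hom_mem_fixed f, fun _ _ c x =>
    Subtype.ext <| (congrArg f.1 (M.coe_cornerAct hS c x)).trans <| (f.2 c x.1).trans
      (N.coe_cornerAct hS c ⟨f.1 x.1, hom_mem_fixed f x.2⟩).symm⟩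
  map_id _ := rfl
  map_comp _ _ := rfl

end UMod

namespace CSMod

variable (N : CSMod k A S)

noncomputable def transition (e f : S) (h : e ≤ f) : N.M e →ₗ[k] N.M f :=
  N.act e f ⟨e, mem_corner_of_mul_eq ((hS.le_iff.1 h).1) (hS.isIdempotentElem e).eq⟩

abbrev Colimit : Type :=
  Module.DirectLimit N.M (N.transition hS)

noncomputable abbrev of (e : S) : N.M e →ₗ[k] N.Colimit hS :=
  Module.DirectLimit.of k S N.M (N.transition hS) e

theorem exists_of (z : N.Colimit hS) : ∃ e x, N.of hS e x = z :=
  have := hS.nonempty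
  have := hS.isDirectedOrder
  Module.DirectLimit.exists_of z

theorem of_act_eq_of_le {e f g : S} (hfg : f ≤ g) (c : corner k A f e) (d : corner k A g e)
    (hcd : (c : A) = d) (x : N.M e) :
    N.of hS f (N.act e f c x) = N.of hS g (N.act e g d x) := by
  rw [← Module.DirectLimit.of_f (hij := hfg), transition,
    ← N.act_comp e f g _ c d (by rw [← hcd, (hS.isIdempotentElem f).mul_eq_of_mem_corner c.2])]

theorem of_act_eq_of_act {e f g : S} (c : corner k A f e) (d : corner k A g e)
    (hcd : (c : A) = d) (x : N.M e) :
    N.of hS f (N.act e f c x) = N.of hS g (N.act e g d x) := by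
  have := hS.isDirectedOrder
  obtain ⟨h, hfh, hgh⟩ := exists_ge_ge f g
  have hmem : (c : A) ∈ corner k A h e :=
    mem_corner_of_mul_eq (hS.mul_eq_of_le hfh ((hS.isIdempotentElem f).mul_eq_of_mem_corner c.2))
      ((hS.isIdempotentElem e).mul_eq_of_mem_corner_right c.2)
  exact (N.of_act_eq_of_le hS hfh c ⟨c, hmem⟩ rfl x).trans
    (N.of_act_eq_of_le hS hgh d ⟨c, hmem⟩ hcd.symm x).symm

theorem of_act_act {α β γ δ : S} (c : corner k A γ β) (d : corner k A β α)
    (cd : corner k A δ α) (hcd : (cd : A) = c * d) (x : N.M α) :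
    N.of hS γ (N.act β γ c (N.act α β d x)) = N.of hS δ (N.act α δ cd x) := by
  have hmem : (c : A) * d ∈ corner k A γ α := mem_corner_of_mul_eq
    (by rw [← mul_assoc, (hS.isIdempotentElem γ).mul_eq_of_mem_corner c.2])
    (by rw [mul_assoc, (hS.isIdempotentElem α).mul_eq_of_mem_corner_right d.2])
  rw [← N.act_comp α β γ c d ⟨_, hmem⟩ rfl]
  exact N.of_act_eq_of_act hS _ cd hcd.symm x

noncomputable def actComponent (a : A) (e : S) : N.M e →ₗ[k] N.Colimit hS :=
  N.of hS (hS.unitFor a) ∘ₗ N.act e (hS.unitFor a)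
    ⟨a * e, mul_mem_corner_of_mul_eq (hS.unitFor_mul a) (hS.isIdempotentElem e)⟩

theorem actComponent_eq {a : A} {e f : S} (c : corner k A f e) (hc : (c : A) = a * e)
    (x : N.M e) : N.actComponent hS a e x = N.of hS f (N.act e f c x) :=
  N.of_act_eq_of_act hS _ c hc.symm x

theorem actComponent_transition (a : A) {e f : S} (h : e ≤ f) (x : N.M e) :
    N.actComponent hS a f (N.transition hS e f h x) = N.actComponent hS a e x :=
  N.of_act_act hS _ _ _ (by simp only [mul_assoc, (hS.le_iff.1 h).1]) x

theorem actComponent_add (a b : A) (e : S) (x : N.M e) :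
    N.actComponent hS (a + b) e x = N.actComponent hS a e x + N.actComponent hS b e x := by
  obtain ⟨f, hfa, hfb⟩ := hS.exists_mul_eq_and_mul_eq a b
  let ca : corner k A f e := ⟨a * e, mul_mem_corner_of_mul_eq hfa (hS.isIdempotentElem e)⟩
  let cb : corner k A f e := ⟨b * e, mul_mem_corner_of_mul_eq hfb (hS.isIdempotentElem e)⟩
  rw [N.actComponent_eq hS (ca + cb) (add_mul a b e).symm, N.actComponent_eq hS ca rfl,
    N.actComponent_eq hS cb rfl, map_add, LinearMap.add_apply, map_add]

theorem actComponent_smul (r : k) (a : A) (e : S) (x : N.M e) :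
    N.actComponent hS (r • a) e x = r • N.actComponent hS a e x := by
  let c : corner k A (hS.unitFor a) e :=
    ⟨a * e, mul_mem_corner_of_mul_eq (hS.unitFor_mul a) (hS.isIdempotentElem e)⟩
  rw [N.actComponent_eq hS (r • c) (smul_mul_assoc r a e).symm, map_smul, LinearMap.smul_apply,
    map_smul]
  rfl

noncomputable def colimitAct : A →ₗ[k] N.Colimit hS →ₗ[k] N.Colimit hS where
  toFun a := Module.DirectLimit.lift k S N.M (N.transition hS) (N.actComponent hS a)
    fun _ _ h x => N.actComponent_transition hS a h x
  map_add' a b := Module.DirectLimit.hom_ext fun e => LinearMap.ext fun x => by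
    simp only [LinearMap.comp_apply, LinearMap.add_apply, Module.DirectLimit.lift_of,
      actComponent_add]
  map_smul' r a := Module.DirectLimit.hom_ext fun e => LinearMap.ext fun x => by
    simp only [LinearMap.comp_apply, LinearMap.smul_apply, Module.DirectLimit.lift_of,
      actComponent_smul, RingHom.id_apply]

theorem colimitAct_of (a : A) (e : S) (x : N.M e) :
    N.colimitAct hS a (N.of hS e x) = N.actComponent hS a e x :=
  Module.DirectLimit.lift_of _ (fun _ _ h x => N.actComponent_transition hS a h x) x

theorem colimitAct_of_act {α β : S} (c : corner k A β α) (x : N.M α) :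
    N.colimitAct hS c (N.of hS α x) = N.of hS β (N.act α β c x) := by
  rw [colimitAct_of,
    N.actComponent_eq hS c ((hS.isIdempotentElem α).mul_eq_of_mem_corner_right c.2).symm]

theorem colimitAct_of_self (e : S) (x : N.M e) :
    N.colimitAct hS e (N.of hS e x) = N.of hS e x := by
  have he := mem_corner_of_mul_eq (k := k) (hS.isIdempotentElem e).eq (hS.isIdempotentElem e).eq
  rw [N.colimitAct_of_act hS ⟨e, he⟩, N.act_id]

theorem colimitAct_mul (r s : A) (z : N.Colimit hS) :
    N.colimitAct hS (r * s) z = N.colimitAct hS r (N.colimitAct hS s z) := by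
  obtain ⟨e, x, rfl⟩ := N.exists_of hS z
  rw [colimitAct_of, colimitAct_of]
  refine ((N.colimitAct_of hS r _ _).trans (N.of_act_act hS _ _ _ ?_ x)).symm
  simp only [mul_assoc]
  rw [← mul_assoc (hS.unitFor s : A), hS.unitFor_mul]

noncomputable def toUMod : UMod k A (LinearMap.mul k A) where
  carrier := N.Colimit hS
  act := N.colimitAct hS
  act_mul := N.colimitAct_mul hS
  unital z := by
    obtain ⟨e, x, rfl⟩ := N.exists_of hS z
    exact Submodule.subset_span ⟨e, _, (N.colimitAct_of_self hS e x).symm⟩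

noncomputable def colimitMap {N' : CSMod k A S} (φ : N ⟶ N') :
    N.Colimit hS →ₗ[k] N'.Colimit hS :=
  Module.DirectLimit.map φ.1 fun _ _ _ => LinearMap.ext (φ.2 _ _ _)

theorem colimitMap_of {N' : CSMod k A S} (φ : N ⟶ N') (e : S) (x : N.M e) :
    N.colimitMap hS φ (N.of hS e x) = N'.of hS e (φ.1 e x) := by
  unfold colimitMap
  exact Module.DirectLimit.map_apply_of _ _ x

theorem colimitMap_colimitAct {N' : CSMod k A S} (φ : N ⟶ N') (a : A) (z : N.Colimit hS) :
    N.colimitMap hS φ (N.colimitAct hS a z) = N'.colimitAct hS a (N.colimitMap hS φ z) := by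
  obtain ⟨e, x, rfl⟩ := N.exists_of hS z
  simp only [colimitMap_of, colimitAct_of, actComponent, LinearMap.comp_apply, φ.2]

end CSMod

noncomputable def CSMod.toUModFunctor : CSMod k A S ⥤ UMod k A (LinearMap.mul k A) where
  obj N := N.toUMod hS
  map {N _} φ := ⟨N.colimitMap hS φ, N.colimitMap_colimitAct hS φ⟩
  map_id _ := Subtype.ext Module.DirectLimit.map_id
  map_comp {N₁ N₂ _} φ ψ := Subtype.ext <| Module.DirectLimit.hom_ext fun e =>
    LinearMap.ext fun x => show N₁.colimitMap hS (φ ≫ ψ) (N₁.of hS e x) =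
      N₂.colimitMap hS ψ (N₁.colimitMap hS φ (N₁.of hS e x)) by
    simp only [colimitMap_of]
    rfl

namespace UMod

variable (M : UMod k A (LinearMap.mul k A))

noncomputable def colimitEval : (M.toCSMod hS).Colimit hS →ₗ[k] M.carrier :=
  Module.DirectLimit.lift k S _ _ (fun e => (M.fixed e).subtype) fun _ _ _ x =>
    (M.coe_cornerAct hS _ x).trans x.2

theorem colimitEval_of (e : S) (x : (M.toCSMod hS).M e) :
    M.colimitEval hS ((M.toCSMod hS).of hS e x) = x.1 := by
  unfold colimitEval
  exact Module.DirectLimit.lift_of _ _ x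

theorem colimitEval_colimitAct (a : A) (z : (M.toCSMod hS).Colimit hS) :
    M.colimitEval hS ((M.toCSMod hS).colimitAct hS a z) = M.act a (M.colimitEval hS z) := by
  obtain ⟨e, x, rfl⟩ := (M.toCSMod hS).exists_of hS z
  rw [CSMod.colimitAct_of, colimitEval_of]
  refine ((M.colimitEval_of hS _ _).trans (M.coe_cornerAct hS _ x)).trans ?_
  rw [act_mul_apply, mem_fixed.1 x.2]

theorem colimitEval_bijective : Function.Bijective (M.colimitEval hS) := by
  refine ⟨?_, fun x => ?_⟩
  · have := hS.isDirectedOrder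
    exact Module.DirectLimit.lift_injective _ _ fun e => Submodule.injective_subtype _
  · refine LinearMap.mem_range.1 (Submodule.span_le.2 ?_ (M.unital x))
    rintro _ ⟨a, y, rfl⟩
    exact ⟨(M.toCSMod hS).of hS (hS.unitFor a)
      ⟨M.act a y, M.act_mem_fixed (hS.unitFor_mul a) y⟩, M.colimitEval_of hS _ _⟩

end UMod

noncomputable def UMod.colimitEvalNatTrans :
    UMod.toCSModFunctor hS ⋙ CSMod.toUModFunctor hS ⟶ 𝟭 (UMod k A (LinearMap.mul k A)) where
  app M := ⟨M.colimitEval hS, M.colimitEval_colimitAct hS⟩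
  naturality M N f := Subtype.ext <| Module.DirectLimit.hom_ext fun e => LinearMap.ext fun x =>
    (congrArg (N.colimitEval hS) ((M.toCSMod hS).colimitMap_of hS _ e x)).trans
      ((N.colimitEval_of hS e _).trans (congrArg f.1 (M.colimitEval_of hS e x)).symm)

namespace CSMod

variable (N : CSMod k A S)

noncomputable def proj (e : S) : N.Colimit hS →ₗ[k] N.M e :=
  Module.DirectLimit.lift k S N.M (N.transition hS)
    (fun f => N.act f e ⟨e * f, mul_mem_corner_of_mul_eq (hS.isIdempotentElem e).eq
      (hS.isIdempotentElem f)⟩)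
    fun f g h x => (N.act_comp _ _ _ _ _ _ (by rw [mul_assoc, (hS.le_iff.1 h).1]) x).symm

theorem proj_of (e f : S) (x : N.M f) :
    N.proj hS e (N.of hS f x) = N.act f e ⟨e * f, mul_mem_corner_of_mul_eq
      (hS.isIdempotentElem e).eq (hS.isIdempotentElem f)⟩ x := by
  unfold proj
  exact Module.DirectLimit.lift_of _ _ x

theorem proj_of_self (e : S) (x : N.M e) : N.proj hS e (N.of hS e x) = x := by
  have he := mem_corner_of_mul_eq (k := k) (hS.isIdempotentElem e).eq (hS.isIdempotentElem e).eq
  rw [proj_of]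
  convert N.act_id e he x using 3
  exact Subtype.ext (hS.isIdempotentElem e).eq

theorem of_injective (e : S) : Function.Injective (N.of hS e) :=
  Function.LeftInverse.injective (N.proj_of_self hS e)

theorem exists_of_mem_fixed {e : S} {z : N.Colimit hS} (hz : z ∈ (N.toUMod hS).fixed e) :
    ∃ x, N.of hS e x = z := by
  obtain ⟨f, y, rfl⟩ := N.exists_of hS z
  have hef := mul_mem_corner_of_mul_eq (k := k) (hS.isIdempotentElem e).eq (hS.isIdempotentElem f)
  refine ⟨N.act f e ⟨_, hef⟩ y, ?_⟩
  rw [← N.actComponent_eq hS _ rfl y, ← colimitAct_of]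
  exact hz

noncomputable def toFixed : N ⟶ (N.toUMod hS).toCSMod hS :=
  ⟨fun e => LinearMap.codRestrict _ (N.of hS e) fun x => N.colimitAct_of_self hS e x,
    fun α _ c x => Subtype.ext <| (N.colimitAct_of_act hS c x).symm.trans
      ((N.toUMod hS).coe_cornerAct hS c ⟨_, N.colimitAct_of_self hS α x⟩).symm⟩

theorem toFixed_bijective (e : S) : Function.Bijective ((N.toFixed hS).1 e) :=
  ⟨fun _ _ h => N.of_injective hS e (congrArg Subtype.val h),
    fun z => (N.exists_of_mem_fixed hS z.2).imp fun _ hx => Subtype.ext hx⟩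

end CSMod

noncomputable def CSMod.toFixedNatTrans :
    𝟭 (CSMod k A S) ⟶ CSMod.toUModFunctor hS ⋙ UMod.toCSModFunctor hS where
  app N := N.toFixed hS
  naturality N _ φ := Subtype.ext <| funext fun e => LinearMap.ext fun x => Subtype.ext <|
    (N.colimitMap_of hS φ e x).symm

end Equivalence

/-- Let `A` be an algebra with a system of local units `S`.  Then the
category of unital left `A`-modules is equivalent to the category of modules over the
`k`-category `C^S(A)` whose objects are the local units and whose morphism spaces are the
corners `e_β A e_α`. -/
theorem unital_modules_equiv_CS_modules (hS : IsSLU A S) :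
    Nonempty ((UMod k A (LinearMap.mul k A)) ≌ CSMod k A S) := by
  have : ∀ M : UMod k A (LinearMap.mul k A), IsIso ((UMod.colimitEvalNatTrans hS).app M) :=
    fun M => UMod.isIso_of_bijective _ (M.colimitEval_bijective hS)
  have : ∀ N : CSMod k A S, IsIso ((CSMod.toFixedNatTrans hS).app N) := fun N =>
    CSMod.isIso_of_bijective (N.toFixed hS) (N.toFixed_bijective hS)
  have := NatIso.isIso_of_isIso_app (UMod.colimitEvalNatTrans (k := k) hS)
  have := NatIso.isIso_of_isIso_app (CSMod.toFixedNatTrans (k := k) hS)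
  exact ⟨.mk (UMod.toCSModFunctor hS) (CSMod.toUModFunctor hS)
    (asIso (UMod.colimitEvalNatTrans hS)).symm (asIso (CSMod.toFixedNatTrans hS)).symm⟩

end Stmt16
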